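/- arXiv:2601.12107 — 3 statements merged into one kernel-verified Lean document; each statement's English description precedes it below -/
import Mathlib

section
/- Let N = 2^n with n ≥ 2, let u be an odd integer, and let s be the Zadoff–Chu sequence of length N with root index u (so s(k) = exp(−π·i·u·k²/N) since N is even). Let π be any polynomial with integer coefficients that is a permutation polynomial over ℤ_{2^n}. Then the interleaved sequence s∘π is a CAZAC sequence: |s(π(k))| = 1 for every k, and for every integer d with 0 < d < N, Σ_{k=0}^{N−1} s(π(k))·conj(s(π(k+d))) = 0. -/
/-!
Write `d = 2^t e` with `e` odd and put `L = 2^(n-1-t)`. The `k`-th correlation term is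
`exp(-π i u f(k) / N)` with `f(k) = π(k)² - π(k+d)²`, and the whole point is that
`f(k + L) - f(k) ≡ N (mod 2N)`, so the terms are antiperiodic with antiperiod `L` and their sum
over `N = 2L · 2^t` consecutive indices vanishes.

For the congruence, write `α`, `β` for the increments of `π` at `k` along `L` and `d`, and `γ` for
the second difference; then `f(k + L) - f(k) = -2αβ - γ(2π(k) + 2α + 2β + γ)`. Since `π` permutes
`ℤ/2^m` for every `m ≤ n`, an increment along `2^j · odd` (`j < n`) is exactly divisible by `2^j`,
so `2αβ = N · odd`. The second difference is divisible by `N`: when `L` or `d` is odd this again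
follows from the exact valuation of increments, and when both are even it holds for every integer
polynomial.
-/

open Polynomial Function

def IsPermPolyMod (p : ℤ[X]) (N : ℕ) : Prop :=
  Bijective fun x : ZMod N => (p.map (Int.castRingHom (ZMod N))).eval x

def secondDiff (p : ℤ[X]) (x a b : ℤ) : ℤ :=
  p.eval (x + a + b) - p.eval (x + a) - p.eval (x + b) + p.eval x

theorem secondDiff_comm (p : ℤ[X]) (x a b : ℤ) : secondDiff p x a b = secondDiff p x b a := by
  simp only [secondDiff, add_right_comm x]
  ring

theorem two_mul_mul_dvd_add_pow_sub_pow_sub_pow {a b : ℤ} (ha : Even a) (hb : Even b) (k : ℕ) :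
    2 * a * b ∣ (a + b) ^ (k + 1) - a ^ (k + 1) - b ^ (k + 1) := by
  induction k with
  | zero => simp
  | succ k ih =>
    have hk : 2 ∣ a ^ k + b ^ k := by
      rcases k.eq_zero_or_pos with rfl | hk
      · norm_num
      · exact ((ha.pow_of_ne_zero hk.ne').add (hb.pow_of_ne_zero hk.ne')).two_dvd
    obtain ⟨c, hc⟩ := ih
    obtain ⟨c', hc'⟩ := hk
    exact ⟨(a + b) * c + c', by linear_combination (a + b) * hc + a * b * hc'⟩

theorem two_mul_mul_dvd_secondDiff (p : ℤ[X]) (x : ℤ) {a b : ℤ} (ha : Even a) (hb : Even b) :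
    2 * a * b ∣ secondDiff p x a b := by
  suffices h : ∀ T : ℤ[X], 2 * a * b ∣ T.eval (a + b) - T.eval a - T.eval b + T.eval 0 by
    convert h (taylor x p) using 1
    simp only [secondDiff, taylor_eval, zero_add]
    ring_nf
  intro T
  induction T using Polynomial.induction_on' with
  | add f g hf hg =>
    convert Int.dvd_add hf hg using 1
    simp only [eval_add]
    ring
  | monomial k c =>
    simp only [eval_monomial, ← mul_sub, ← mul_add]
    apply dvd_mul_of_dvd_right
    rcases k with _ | k
    · simp
    · simpa using two_mul_mul_dvd_add_pow_sub_pow_sub_pow ha hb k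

namespace IsPermPolyMod

variable {p : ℤ[X]}

theorem of_dvd {m N : ℕ} [NeZero m] (hp : IsPermPolyMod p N) (hmN : m ∣ N) :
    IsPermPolyMod p m := by
  have hsurj : Surjective fun x : ZMod m => (p.map (Int.castRingHom (ZMod m))).eval x := by
    intro z
    obtain ⟨w, rfl⟩ := ZMod.castHom_surjective hmN z
    obtain ⟨y, rfl⟩ := hp.surjective w
    refine ⟨ZMod.castHom hmN (ZMod m) y, ?_⟩
    simp only [eval_map, hom_eval₂, RingHom.ext_int (RingHom.comp _ _) (Int.castRingHom _)]
  exact ⟨Finite.injective_iff_surjective.mpr hsurj, hsurj⟩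

theorem modEq_of_eval_modEq {m : ℕ} (hp : IsPermPolyMod p m) {x y : ℤ}
    (h : p.eval x ≡ p.eval y [ZMOD m]) : x ≡ y [ZMOD m] := by
  rw [← ZMod.intCast_eq_intCast_iff] at h ⊢
  apply hp.injective
  simpa only [eval_intCast_map, eq_intCast, Int.cast_id] using h

theorem exists_eval_add_sub_eval_eq_pow_mul {ℓ n j : ℕ} (hℓ : ℓ ≠ 0)
    (hp : IsPermPolyMod p (ℓ ^ n)) (hj : j < n) {o : ℤ} (ho : ¬ (ℓ : ℤ) ∣ o) (y : ℤ) :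
    ∃ q : ℤ, ¬ (ℓ : ℤ) ∣ q ∧ p.eval (y + ℓ ^ j * o) - p.eval y = ℓ ^ j * q := by
  have hdvd : (ℓ : ℤ) ^ j ∣ p.eval (y + ℓ ^ j * o) - p.eval y :=
    (dvd_mul_right _ o).trans (by simpa using sub_dvd_eval_sub (y + ℓ ^ j * o) y p)
  obtain ⟨q, hq⟩ := hdvd
  refine ⟨q, fun ⟨r, hr⟩ => ho ?_, hq⟩
  have : NeZero (ℓ ^ (j + 1)) := ⟨pow_ne_zero _ hℓ⟩
  have hmod : p.eval (y + ℓ ^ j * o) ≡ p.eval y [ZMOD (ℓ ^ (j + 1) : ℕ)] :=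
    Int.modEq_iff_dvd.mpr ⟨-r, by push_cast; rw [pow_succ]; linear_combination -hq - ℓ ^ j * hr⟩
  have := Int.ModEq.dvd ((hp.of_dvd (pow_dvd_pow ℓ hj)).modEq_of_eval_modEq hmod).symm
  push_cast at this
  rw [add_sub_cancel_left, pow_succ] at this
  exact (mul_dvd_mul_iff_left (pow_ne_zero j (by exact_mod_cast hℓ))).mp this

theorem exists_odd_eval_add_sub_eval_eq_two_pow_mul {n j : ℕ} (hp : IsPermPolyMod p (2 ^ n))
    (hj : j < n) {o : ℤ} (ho : Odd o) (y : ℤ) :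
    ∃ q : ℤ, Odd q ∧ p.eval (y + 2 ^ j * o) - p.eval y = 2 ^ j * q := by
  have ho' : ¬ ((2 : ℕ) : ℤ) ∣ o := by simpa [← even_iff_two_dvd] using ho
  obtain ⟨q, hq, h⟩ := hp.exists_eval_add_sub_eval_eq_pow_mul two_ne_zero hj ho' y
  exact ⟨q, by simpa [← even_iff_two_dvd] using hq, by simpa using h⟩

theorem two_pow_succ_dvd_secondDiff {n j : ℕ} (hp : IsPermPolyMod p (2 ^ n)) (hj : j < n)
    {o : ℤ} (ho : Odd o) (x b : ℤ) : 2 ^ (j + 1) ∣ secondDiff p x (2 ^ j * o) b := by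
  obtain ⟨q₁, hq₁, h₁⟩ := hp.exists_odd_eval_add_sub_eval_eq_two_pow_mul hj ho (x + b)
  obtain ⟨q₀, hq₀, h₀⟩ := hp.exists_odd_eval_add_sub_eval_eq_two_pow_mul hj ho x
  obtain ⟨r, hr⟩ := hq₁.sub_odd hq₀
  refine ⟨r, ?_⟩
  rw [secondDiff, add_right_comm]
  linear_combination h₁ - h₀ + 2 ^ j * hr

theorem two_pow_dvd_secondDiff {i j : ℕ} (hp : IsPermPolyMod p (2 ^ (i + j + 1)))
    {o e : ℤ} (ho : Odd o) (he : Odd e) (x : ℤ) :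
    2 ^ (i + j + 1) ∣ secondDiff p x (2 ^ i * o) (2 ^ j * e) := by
  rcases Nat.eq_zero_or_pos i with rfl | hi
  · rw [secondDiff_comm, zero_add]
    exact hp.two_pow_succ_dvd_secondDiff (by omega) he x _
  rcases Nat.eq_zero_or_pos j with rfl | hj
  · exact hp.two_pow_succ_dvd_secondDiff (by omega) ho x _
  have hdvd := two_mul_mul_dvd_secondDiff p x ((even_two.pow_of_ne_zero hi.ne').mul_right o)
    ((even_two.pow_of_ne_zero hj.ne').mul_right e)
  exact Dvd.dvd.trans ⟨o * e, by ring⟩ hdvd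

theorem exists_odd_sq_sub_sq_shift_eq {i j : ℕ} (hp : IsPermPolyMod p (2 ^ (i + j + 1)))
    {o e : ℤ} (ho : Odd o) (he : Odd e) (x : ℤ) :
    ∃ m : ℤ, Odd m ∧
      p.eval (x + 2 ^ i * o) ^ 2 - p.eval (x + 2 ^ i * o + 2 ^ j * e) ^ 2
        - (p.eval x ^ 2 - p.eval (x + 2 ^ j * e) ^ 2) = 2 ^ (i + j + 1) * m := by
  obtain ⟨q₁, hq₁, hα⟩ := hp.exists_odd_eval_add_sub_eval_eq_two_pow_mul (j := i) (by omega) ho x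
  obtain ⟨q₂, hq₂, hβ⟩ := hp.exists_odd_eval_add_sub_eval_eq_two_pow_mul (j := j) (by omega) he x
  obtain ⟨g, hγ⟩ := hp.two_pow_dvd_secondDiff ho he x
  rw [secondDiff] at hγ
  set A := p.eval x
  set B := p.eval (x + 2 ^ j * e)
  set C := p.eval (x + 2 ^ i * o)
  set D := p.eval (x + 2 ^ i * o + 2 ^ j * e)
  refine ⟨-(q₁ * q₂) - 2 * g * (A + 2 ^ i * q₁ + 2 ^ j * q₂ + 2 ^ (i + j) * g), ?_, ?_⟩
  · exact (hq₁.mul hq₂).neg.sub_even (even_two_mul _ |>.mul_right _)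
  -- the left side is `-2αβ - γ(2A + 2α + 2β + γ)` for `α = C - A`, `β = B - A`, `γ = D - C - B + A`
  linear_combination (-2 * (B - A) - 2 * (2 ^ (i + j + 1) * g)) * hα
    + (-2 * (2 ^ i * q₁) - 2 * (2 ^ (i + j + 1) * g)) * hβ
    + (-(2 * A + 2 * (C - A) + 2 * (B - A) + (D - C - B + A)) - 2 ^ (i + j + 1) * g) * hγ

end IsPermPolyMod

theorem Function.Antiperiodic.sum_range_two_mul_mul_eq_zero {M : Type*} [AddCommGroup M]
    {h : ℕ → M} {L : ℕ} (hh : Antiperiodic h L) (m : ℕ) :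
    ∑ k ∈ Finset.range (2 * L * m), h k = 0 := by
  induction m with
  | zero => simp
  | succ m ih =>
    rw [mul_add_one, Finset.sum_range_add, ih, two_mul L, Finset.sum_range_add]
    simp [← add_assoc, add_right_comm _ L, hh _]

/-- The ZC sequence of even length `N` is `k ↦ zcPhase N u (k ^ 2)`. -/
noncomputable def zcPhase (N : ℕ) (u m : ℤ) : ℂ :=
  Complex.exp (-(Real.pi : ℂ) * Complex.I * u * m / N)

theorem norm_zcPhase (N : ℕ) (u m : ℤ) : ‖zcPhase N u m‖ = 1 := by
  rw [zcPhase, ← Complex.norm_exp_ofReal_mul_I (-Real.pi * u * m / N)]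
  push_cast
  ring_nf

theorem zcPhase_mul_conj (N : ℕ) (u a b : ℤ) :
    zcPhase N u a * (starRingEnd ℂ) (zcPhase N u b) = zcPhase N u (a - b) := by
  simp only [zcPhase, ← Complex.exp_conj, ← Complex.exp_add, map_div₀, map_mul, map_neg,
    Complex.conj_ofReal, Complex.conj_I, map_intCast, map_natCast]
  push_cast
  ring_nf

theorem zcPhase_add_mul_odd {N : ℕ} (hN : N ≠ 0) {u m : ℤ} (hu : Odd u) (hm : Odd m) (a : ℤ) :
    zcPhase N u (a + N * m) = -zcPhase N u a := by
  have hsplit : -(Real.pi : ℂ) * Complex.I * u * ↑(a + N * m) / N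
      = -(Real.pi : ℂ) * Complex.I * u * a / N + ((-(u * m) : ℤ) : ℂ) * (Real.pi * Complex.I) := by
    push_cast
    field_simp
    ring
  rw [zcPhase, zcPhase, hsplit, Complex.exp_add, Complex.exp_int_mul, Complex.exp_pi_mul_I,
    (hu.mul hm).neg.neg_one_zpow, mul_neg_one]

theorem stmt_10_general (n : ℕ) (N : ℕ) (hN : N = 2 ^ n)
    (u : ℤ) (hu : Odd u)
    (s : ℤ → ℂ)
    (hs : ∀ k : ℤ, s k =
      Complex.exp (-(Real.pi : ℂ) * Complex.I * (u : ℂ) * (k : ℂ) ^ 2 / (N : ℂ)))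
    (π : Polynomial ℤ)
    (hPP : Function.Bijective
      (fun x : ZMod N => (π.map (Int.castRingHom (ZMod N))).eval x)) :
    (∀ k : ℤ, ‖s (π.eval k)‖ = 1) ∧
    ∀ d : ℕ, 0 < d → d < N →
      ∑ k ∈ Finset.range N,
          s (π.eval (k : ℤ)) * (starRingEnd ℂ) (s (π.eval ((k : ℤ) + (d : ℤ)))) = 0 := by
  subst hN
  have hs' : ∀ k, s k = zcPhase (2 ^ n) u (k ^ 2) := fun k => by rw [hs, zcPhase]; push_cast; rfl
  refine ⟨fun k => by rw [hs', norm_zcPhase], fun d hd hdN => ?_⟩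
  obtain ⟨t, e, he, rfl⟩ := Nat.exists_eq_two_pow_mul_odd hd.ne'
  have ht : t < n :=
    (Nat.pow_lt_pow_iff_right one_lt_two).mp ((Nat.le_mul_of_pos_right _ he.pos).trans_lt hdN)
  obtain ⟨i, rfl⟩ : ∃ i, n = i + t + 1 := ⟨n - 1 - t, by omega⟩
  rw [show 2 ^ (i + t + 1) = 2 * 2 ^ i * 2 ^ t by ring]
  refine Antiperiodic.sum_range_two_mul_mul_eq_zero (fun k => ?_) _
  obtain ⟨m, hm, hshift⟩ :=
    IsPermPolyMod.exists_odd_sq_sub_sq_shift_eq hPP odd_one (he.natCast (R := ℤ)) (k : ℤ)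
  have hcast : (2 : ℤ) ^ (i + t + 1) = ((2 ^ (i + t + 1) : ℕ) : ℤ) := by push_cast; rfl
  rw [mul_one, hcast] at hshift
  simp only [hs', zcPhase_mul_conj]
  push_cast
  rw [eq_add_of_sub_eq' hshift, zcPhase_add_mul_odd (by positivity) hu hm]

/-- Theorem 4.2(i): for `N = 2^n` (`n ≥ 2`), an odd root index `u`, the ZC sequence
`s(k) = exp(−π i u k²/N)`, and any polynomial `π ∈ ℤ[x]` which is a permutation polynomial
over `ℤ_{2^n}`, the interleaved sequence `s∘π` is a CAZAC sequence. -/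
theorem stmt_10 (n : ℕ) (hn : 2 ≤ n) (N : ℕ) (hN : N = 2 ^ n)
    (u : ℤ) (hu : Odd u)
    (s : ℤ → ℂ)
    (hs : ∀ k : ℤ, s k =
      Complex.exp (-(Real.pi : ℂ) * Complex.I * (u : ℂ) * (k : ℂ) ^ 2 / (N : ℂ)))
    (π : Polynomial ℤ)
    (hPP : Function.Bijective
      (fun x : ZMod N => (π.map (Int.castRingHom (ZMod N))).eval x)) :
    (∀ k : ℤ, ‖s (π.eval k)‖ = 1) ∧
    ∀ d : ℕ, 0 < d → d < N →
      ∑ k ∈ Finset.range N,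
          s (π.eval (k : ℤ)) * (starRingEnd ℂ) (s (π.eval ((k : ℤ) + (d : ℤ)))) = 0 :=
  stmt_10_general n N hN u hu s hs π hPP
end

section
/- Let N = 2^n with n ≥ 2, let u be an odd integer, and let s be the Zadoff–Chu sequence of length N with root index u (so s(k) = exp(−π·i·u·k²/N) since N is even). Let π be any polynomial with integer coefficients that is a permutation polynomial over ℤ_{2^n}, let σ be the permutation of ℤ/Nℤ induced by π, and define y : ℤ/Nℤ → ℂ by y(x) = s(k) for any integer representative k of σ⁻¹(x). Then y is a CAZAC sequence: |y(x)| = 1 for every x, and for every nonzero d ∈ ℤ/Nℤ, Σ_{x ∈ ℤ/Nℤ} y(x)·conj(y(x+d)) = 0. -/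
/-!
Let `Q ∈ ℤ[X]` induce `σ⁻¹` (it exists since `σ` has finite order), so that `y(x) = s(Q(ℓ))`
for any representative `ℓ` of `x`. As a permutation polynomial modulo `2ⁿ` (`n ≥ 2`), `Q` maps
odd differences to odd differences and has odd derivative everywhere; hence for `h = 2ᵃ` and
`d = 2ᵛ E` with `E` odd and `a + v + 1 = n`, the quantity
`Q(ℓ+h+d)² - Q(ℓ+h)² - Q(ℓ+d)² + Q(ℓ)²` is `≡ 2ⁿ (mod 2ⁿ⁺¹)`.
For the ZC sequence this says `y(x+h) ȳ(x+h+d) = -y(x) ȳ(x+d)`, so shifting the summation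
variable by `h` negates the autocorrelation at `d`, which must therefore vanish.
-/

open Polynomial ComplexConjugate

theorem two_mul_mul_dvd_add_pow_sub_pow_sub_pow_s11 {R : Type*} [CommRing R] {x y : R}
    (hx : 2 ∣ x) (hy : 2 ∣ y) {i : ℕ} (hi : 2 ≤ i) : 2 * x * y ∣ (x + y) ^ i - x ^ i - y ^ i := by
  induction i, hi using Nat.le_induction with
  | base => exact ⟨1, by ring⟩
  | succ i hi ih =>
    obtain ⟨j, rfl⟩ : ∃ j, i = j + 1 := ⟨i - 1, by omega⟩
    obtain ⟨c, hc⟩ : 2 ∣ y ^ j + x ^ j :=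
      dvd_add (hy.trans (dvd_pow_self y (by omega))) (hx.trans (dvd_pow_self x (by omega)))
    obtain ⟨r, hr⟩ := ih
    exact ⟨(x + y) * r + c, by linear_combination (x + y) * hr + x * y * hc⟩

theorem Int.ModEq.sq_two_mul {m a b : ℤ} (hm : 2 ∣ m) (h : a ≡ b [ZMOD m]) :
    a ^ 2 ≡ b ^ 2 [ZMOD 2 * m] := by
  obtain ⟨t, ht⟩ := Int.modEq_iff_dvd.mp h
  obtain ⟨c, hc⟩ : 2 ∣ b + a := by
    rw [show b + a = (b - a) + 2 * a by ring, ht]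
    exact dvd_add (hm.mul_right t) (dvd_mul_right 2 a)
  exact Int.modEq_iff_dvd.mpr ⟨t * c, by linear_combination (b + a) * ht + m * t * hc⟩

theorem Int.sq_sub_sq_sub_sq_add_sq_modEq {n a v : ℕ} (hav : a + v + 1 = n)
    {A B C D w₁ w₂ w₃ : ℤ} (hAC : A - C = 2 ^ a * w₁) (hBD : B - D = 2 ^ a * w₂)
    (hCD : C - D = 2 ^ v * w₃) (h₁ : Odd w₁) (h₂ : Odd w₂) (h₃ : Odd w₃)
    (hΔ : 2 ^ n ∣ A - B - C + D) : A ^ 2 - B ^ 2 - C ^ 2 + D ^ 2 ≡ 2 ^ n [ZMOD 2 ^ (n + 1)] := by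
  obtain rfl : A = C + 2 ^ a * w₁ := by linear_combination hAC
  obtain rfl : B = D + 2 ^ a * w₂ := by linear_combination hBD
  obtain rfl : C = D + 2 ^ v * w₃ := by linear_combination hCD
  obtain ⟨m, hm⟩ := hΔ
  obtain ⟨t, ht⟩ := h₁.mul h₃
  obtain ⟨r, hr⟩ := h₁.add_odd h₂
  subst hav
  refine Int.modEq_iff_dvd.mpr ⟨-(t + (2 ^ a * r + D) * m), ?_⟩
  -- `A² - B² - C² + D² = 2 (A - C)(C - D) + (A - C + B + D)(A - B - C + D)`
  linear_combination (-(2 * D + 2 ^ a * w₁ + 2 ^ a * w₂)) * hm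
    - 2 ^ (a + v + 1) * 2 ^ a * m * hr - 2 ^ (a + v + 1) * ht

theorem Int.odd_sub_iff_intCast_ne (a b : ℤ) : Odd (a - b) ↔ (a : ZMod 2) ≠ b := by
  rw [Ne, ZMod.intCast_eq_intCast_iff_dvd_sub, ← Int.not_even_iff_odd, even_iff_two_dvd,
    ← dvd_neg, neg_sub]
  rfl

namespace Polynomial

theorem exists_eval_map_eq_perm_pow {S R : Type*} [CommSemiring S] [CommSemiring R]
    (φ : S →+* R) (p : S[X]) (σ : Equiv.Perm R) (hσ : ∀ x, σ x = (p.map φ).eval x) (m : ℕ) :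
    ∃ q : S[X], ∀ x, (σ ^ m) x = (q.map φ).eval x := by
  induction m with
  | zero => exact ⟨X, by simp⟩
  | succ m ih =>
    obtain ⟨q, hq⟩ := ih
    exact ⟨p.comp q, fun x => by rw [pow_succ', Equiv.Perm.mul_apply, hq, hσ, map_comp, eval_comp]⟩

theorem exists_eval_map_eq_symm {S R : Type*} [CommSemiring S] [CommSemiring R] [Finite R]
    (φ : S →+* R) (p : S[X]) (σ : R ≃ R) (hσ : ∀ x, σ x = (p.map φ).eval x) :
    ∃ q : S[X], ∀ x, σ.symm x = (q.map φ).eval x := by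
  have hinv : σ⁻¹ = σ ^ (orderOf σ - 1) :=
    (eq_inv_of_mul_eq_one_left (by
      rw [pow_sub_one_mul (orderOf_pos σ).ne', pow_orderOf_eq_one])).symm
  obtain ⟨q, hq⟩ := exists_eval_map_eq_perm_pow φ p σ hσ (orderOf σ - 1)
  exact ⟨q, fun x => by rw [← hq, ← hinv]; rfl⟩

theorem surjective_eval_map_of_dvd {m N : ℕ} (hmN : m ∣ N) (Q : ℤ[X])
    (hQ : Function.Surjective fun z : ZMod N => (Q.map (Int.castRingHom (ZMod N))).eval z) :
    Function.Surjective fun z : ZMod m => (Q.map (Int.castRingHom (ZMod m))).eval z := by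
  set ψ := ZMod.castHom hmN (ZMod m)
  have hψ : ∀ z, ψ ((Q.map (Int.castRingHom (ZMod N))).eval z) =
      (Q.map (Int.castRingHom (ZMod m))).eval (ψ z) := fun z => by
    rw [eval_map, hom_eval₂, eval_map, RingHom.ext_int (ψ.comp _) (Int.castRingHom _)]
  intro t
  obtain ⟨z, rfl⟩ := ZMod.castHom_surjective hmN t
  obtain ⟨w, hw⟩ := hQ z
  exact ⟨ψ w, (hψ w).symm.trans (congrArg ψ hw)⟩

theorem odd_eval_sub_of_surjective {n : ℕ} (hn : n ≠ 0) (Q : ℤ[X])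
    (hQ : Function.Surjective fun z : ZMod (2 ^ n) => (Q.map (Int.castRingHom _)).eval z)
    {a b : ℤ} (hab : Odd (a - b)) : Odd (Q.eval a - Q.eval b) := by
  have hQ₂ := Finite.injective_iff_surjective.mpr
    (surjective_eval_map_of_dvd (dvd_pow_self 2 hn) Q hQ)
  rw [Int.odd_sub_iff_intCast_ne] at hab ⊢
  simpa using hQ₂.ne hab

theorem odd_derivative_eval_of_injective {n : ℕ} (hn : 2 ≤ n) (Q : ℤ[X])
    (hQ : Function.Injective fun z : ZMod (2 ^ n) => (Q.map (Int.castRingHom _)).eval z)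
    (w : ℤ) : Odd (Q.derivative.eval w) := by
  obtain ⟨m, rfl⟩ : ∃ m, n = m + 2 := ⟨n - 2, by omega⟩
  by_contra hev
  obtain ⟨c, hc⟩ := Int.not_odd_iff_even.mp hev
  obtain ⟨k, hk⟩ := Q.binomExpansion w (2 ^ (m + 1))
  -- an even `Q'(w)` would make `Q` blind to the shift by `2ⁿ⁻¹`
  have hhalf : ((Q.eval (w + 2 ^ (m + 1)) : ℤ) : ZMod (2 ^ (m + 2))) = (Q.eval w : ℤ) := by
    rw [ZMod.intCast_eq_intCast_iff_dvd_sub, hk, hc]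
    exact ⟨-(c + k * 2 ^ m), by push_cast; ring⟩
  have hw := @hQ (w + 2 ^ (m + 1) : ℤ) (w : ℤ)
    (by simp only [eval_intCast_map, eq_intCast]; exact hhalf)
  rw [ZMod.intCast_eq_intCast_iff_dvd_sub] at hw
  have h2 : (2 : ℤ) ^ (m + 1) * 2 ∣ 2 ^ (m + 1) * (-1) := by
    convert hw using 1 <;> push_cast <;> ring
  have := (mul_dvd_mul_iff_left (by positivity)).mp h2
  norm_num at this

theorem exists_odd_eval_add_two_pow_mul_sub (Q : ℤ[X])
    (hodd : ∀ a b, Odd (a - b) → Odd (Q.eval a - Q.eval b))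
    (hderiv : ∀ w, Odd (Q.derivative.eval w)) (t : ℤ) (k : ℕ) {e : ℤ} (he : Odd e) :
    ∃ w, Odd w ∧ Q.eval (t + 2 ^ k * e) - Q.eval t = 2 ^ k * w := by
  rcases Nat.eq_zero_or_pos k with rfl | hk
  · exact ⟨_, hodd (t + 2 ^ 0 * e) t (by simpa using he), by simp⟩
  · obtain ⟨c, hc⟩ := Q.binomExpansion t (2 ^ k * e)
    have h2k : Even ((2 : ℤ) ^ k) := Int.even_pow.mpr ⟨even_two, hk.ne'⟩
    exact ⟨e * (Q.derivative.eval t + c * 2 ^ k * e),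
      he.mul ((hderiv t).add_even ((h2k.mul_left c).mul_right e)), by rw [hc]; ring⟩

theorem two_mul_mul_dvd_eval_add_add_sub {R : Type*} [CommRing R] (P : R[X]) (ℓ : R)
    {x y : R} (hx : 2 ∣ x) (hy : 2 ∣ y) :
    2 * x * y ∣ P.eval (ℓ + x + y) - P.eval (ℓ + x) - P.eval (ℓ + y) + P.eval ℓ := by
  suffices h : 2 * x * y ∣ (taylor ℓ P).eval (x + y) - (taylor ℓ P).eval x -
      (taylor ℓ P).eval y + (taylor ℓ P).eval 0 by
    simpa only [taylor_eval, add_comm _ ℓ, add_assoc, add_zero] using h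
  induction taylor ℓ P using Polynomial.induction_on' with
  | add p q hp hq =>
    convert dvd_add hp hq using 1
    simp only [eval_add]
    ring
  | monomial i c =>
    simp only [eval_monomial]
    match i with
    | 0 => simp
    | 1 => exact ⟨0, by ring⟩
    | i + 2 =>
      obtain ⟨r, hr⟩ := two_mul_mul_dvd_add_pow_sub_pow_sub_pow_s11 hx hy (i := i + 2) (by omega)
      exact ⟨c * r, by rw [zero_pow (by omega)]; linear_combination c * hr⟩

theorem two_mul_dvd_eval_add_add_sub (Q : ℤ[X]) (hderiv : ∀ w, Odd (Q.derivative.eval w))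
    (ℓ x : ℤ) {y : ℤ} (hy : 2 ∣ y) :
    2 * y ∣ Q.eval (ℓ + x + y) - Q.eval (ℓ + x) - Q.eval (ℓ + y) + Q.eval ℓ := by
  rw [add_right_comm ℓ x]
  obtain ⟨k, hk⟩ := (Q.comp (X + C x) - Q).binomExpansion ℓ y
  obtain ⟨c, hc⟩ := (hderiv (ℓ + x)).sub_odd (hderiv ℓ)
  simp only [eval_sub, eval_comp, eval_add, eval_X, eval_C, derivative_sub, derivative_comp,
    derivative_add, derivative_X, derivative_C, add_zero, one_mul] at hk
  obtain ⟨z, rfl⟩ := hy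
  exact ⟨c + k * z, by linear_combination hk + 2 * z * hc⟩

theorem two_pow_dvd_eval_add_add_sub (Q : ℤ[X]) (hderiv : ∀ w, Odd (Q.derivative.eval w))
    {n a v : ℕ} (hn : 2 ≤ n) (hav : a + v + 1 = n) (ℓ E : ℤ) :
    2 ^ n ∣ Q.eval (ℓ + 2 ^ a + 2 ^ v * E) - Q.eval (ℓ + 2 ^ a) -
      Q.eval (ℓ + 2 ^ v * E) + Q.eval ℓ := by
  subst hav
  rcases Nat.eq_zero_or_pos a with rfl | ha
  · exact dvd_trans ⟨E, by ring⟩ (Q.two_mul_dvd_eval_add_add_sub hderiv ℓ 1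
      ((dvd_pow_self 2 (by omega)).mul_right E))
  rcases Nat.eq_zero_or_pos v with rfl | hv
  · have h := Q.two_mul_dvd_eval_add_add_sub hderiv ℓ E (dvd_pow_self 2 ha.ne')
    rw [add_right_comm ℓ E] at h
    rw [pow_zero, one_mul, add_zero, pow_succ']
    convert h using 1
    ring
  · exact dvd_trans ⟨E, by ring⟩ (Q.two_mul_mul_dvd_eval_add_add_sub ℓ
      (dvd_pow_self 2 ha.ne') ((dvd_pow_self 2 hv.ne').mul_right E))

theorem sq_eval_add_add_sub_modEq (Q : ℤ[X])
    (hodd : ∀ a b, Odd (a - b) → Odd (Q.eval a - Q.eval b))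
    (hderiv : ∀ w, Odd (Q.derivative.eval w)) {n a v : ℕ} (hn : 2 ≤ n) (hav : a + v + 1 = n)
    (ℓ : ℤ) {E : ℤ} (hE : Odd E) :
    Q.eval (ℓ + 2 ^ a + 2 ^ v * E) ^ 2 - Q.eval (ℓ + 2 ^ a) ^ 2 - Q.eval (ℓ + 2 ^ v * E) ^ 2 +
      Q.eval ℓ ^ 2 ≡ 2 ^ n [ZMOD 2 ^ (n + 1)] := by
  obtain ⟨w₁, h₁, hAC⟩ :=
    Q.exists_odd_eval_add_two_pow_mul_sub hodd hderiv (ℓ + 2 ^ v * E) a odd_one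
  obtain ⟨w₂, h₂, hBD⟩ := Q.exists_odd_eval_add_two_pow_mul_sub hodd hderiv ℓ a odd_one
  obtain ⟨w₃, h₃, hCD⟩ := Q.exists_odd_eval_add_two_pow_mul_sub hodd hderiv ℓ v hE
  rw [mul_one, add_right_comm] at hAC
  rw [mul_one] at hBD
  exact Int.sq_sub_sq_sub_sq_add_sq_modEq hav hAC hBD hCD h₁ h₂ h₃
    (Q.two_pow_dvd_eval_add_add_sub hderiv hn hav ℓ E)

end Polynomial

noncomputable def zadoffChu (u : ℤ) (N : ℕ) (k : ℤ) : ℂ :=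
  Complex.exp (-(Real.pi : ℂ) * Complex.I * (u : ℂ) * (k : ℂ) ^ 2 / (N : ℂ))

theorem norm_zadoffChu (u : ℤ) (N : ℕ) (k : ℤ) : ‖zadoffChu u N k‖ = 1 := by
  rw [zadoffChu, ← Complex.norm_exp_ofReal_mul_I (-Real.pi * u * k ^ 2 / N)]
  push_cast
  ring_nf

theorem zadoffChu_mul_conj (u : ℤ) (N : ℕ) (k l : ℤ) :
    zadoffChu u N k * conj (zadoffChu u N l) =
      Complex.exp (-(Real.pi : ℂ) * Complex.I * u * (k ^ 2 - l ^ 2) / N) := by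
  rw [zadoffChu, zadoffChu, ← Complex.exp_conj, ← Complex.exp_add]
  congr 1
  simp only [map_div₀, map_mul, map_neg, map_pow, Complex.conj_ofReal, Complex.conj_I,
    map_intCast, map_natCast]
  ring

theorem Complex.exp_int_mul_pi_mul_I_of_odd {m : ℤ} (hm : Odd m) :
    Complex.exp (m * (Real.pi * Complex.I)) = -1 := by
  obtain ⟨t, rfl⟩ := hm
  rw [show ((2 * t + 1 : ℤ) : ℂ) * (Real.pi * Complex.I) =
      t * (2 * Real.pi * Complex.I) + Real.pi * Complex.I by push_cast; ring,
    Complex.exp_add, Complex.exp_int_mul_two_pi_mul_I, Complex.exp_pi_mul_I, one_mul]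

theorem zadoffChu_mul_conj_eq_neg {u : ℤ} (hu : Odd u) {N : ℕ} (hN : N ≠ 0) {a b c d : ℤ}
    (h : a ^ 2 - b ^ 2 - c ^ 2 + d ^ 2 ≡ N [ZMOD 2 * N]) :
    zadoffChu u N b * conj (zadoffChu u N a) = -(zadoffChu u N d * conj (zadoffChu u N c)) := by
  obtain ⟨M, hM⟩ := Int.modEq_iff_dvd.mp h.symm
  have hphase : -(Real.pi : ℂ) * Complex.I * u * (b ^ 2 - a ^ 2) / N =
      -(Real.pi : ℂ) * Complex.I * u * (d ^ 2 - c ^ 2) / N +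
        ((u * (2 * M + 1) : ℤ) : ℂ) * (Real.pi * Complex.I) := by
    have hquot : ((a : ℂ) ^ 2 - b ^ 2 - c ^ 2 + d ^ 2) / N = 2 * M + 1 := by
      rw [div_eq_iff (Nat.cast_ne_zero.mpr hN)]
      have hMC : (a : ℂ) ^ 2 - b ^ 2 - c ^ 2 + d ^ 2 - N = 2 * N * M := by exact_mod_cast hM
      linear_combination hMC
    calc _ = -(Real.pi : ℂ) * Complex.I * u * (d ^ 2 - c ^ 2) / N +
          Real.pi * Complex.I * u * (((a : ℂ) ^ 2 - b ^ 2 - c ^ 2 + d ^ 2) / N) := by ring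
      _ = _ := by rw [hquot]; push_cast; ring
  rw [zadoffChu_mul_conj, zadoffChu_mul_conj, hphase, Complex.exp_add,
    Complex.exp_int_mul_pi_mul_I_of_odd (hu.mul (odd_two_mul_add_one M)), mul_neg_one]

theorem zadoffChu_comp_mul_conj_eq_neg {n : ℕ} (hn : 2 ≤ n) {u : ℤ} (hu : Odd u) (Q : ℤ[X])
    (hodd : ∀ a b, Odd (a - b) → Odd (Q.eval a - Q.eval b))
    (hderiv : ∀ w, Odd (Q.derivative.eval w)) {τ : ℤ → ℤ}
    (hτ : ∀ ℓ, τ ℓ ≡ Q.eval ℓ [ZMOD 2 ^ n]) {a v : ℕ} (hav : a + v + 1 = n) {E : ℤ}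
    (hE : Odd E) (ℓ : ℤ) :
    zadoffChu u (2 ^ n) (τ (ℓ + 2 ^ a)) * conj (zadoffChu u (2 ^ n) (τ (ℓ + 2 ^ a + 2 ^ v * E))) =
      -(zadoffChu u (2 ^ n) (τ ℓ) * conj (zadoffChu u (2 ^ n) (τ (ℓ + 2 ^ v * E)))) := by
  have hsq : ∀ ℓ, τ ℓ ^ 2 ≡ Q.eval ℓ ^ 2 [ZMOD 2 ^ (n + 1)] := fun ℓ => by
    rw [pow_succ']
    exact (hτ ℓ).sq_two_mul (dvd_pow_self 2 (by omega))
  refine zadoffChu_mul_conj_eq_neg hu (by positivity) ?_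
  push_cast
  rw [← pow_succ']
  exact ((((hsq _).sub (hsq _)).sub (hsq _)).add (hsq _)).trans
    (Q.sq_eval_add_add_sub_modEq hodd hderiv hn hav ℓ hE)

theorem Fintype.sum_eq_zero_of_add_right_eq_neg {G M : Type*} [AddGroup G] [Fintype G]
    [NonAssocRing M] [NoZeroDivisors M] [CharZero M] (g : G → M) (h : G)
    (hg : ∀ x, g (x + h) = -g x) : ∑ x, g x = 0 := by
  refine CharZero.eq_neg_self_iff.mp ?_
  conv_lhs => rw [← Equiv.sum_comp (Equiv.addRight h) g]
  simp only [Equiv.coe_addRight, hg, Finset.sum_neg_distrib]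

theorem ZMod.exists_eq_two_pow_mul_odd {n : ℕ} {d : ZMod (2 ^ n)} (hd : d ≠ 0) :
    ∃ v E, v < n ∧ Odd E ∧ d = ((2 ^ v * E : ℤ) : ZMod (2 ^ n)) := by
  obtain ⟨v, e, he, hde⟩ := Nat.exists_eq_two_pow_mul_odd ((ZMod.val_ne_zero d).mpr hd)
  refine ⟨v, e, ?_, by exact_mod_cast he, ?_⟩
  · have h2v : 2 ^ v ≤ d.val := hde ▸ Nat.le_mul_of_pos_right _ he.pos
    exact (Nat.pow_lt_pow_iff_right (by norm_num)).mp (h2v.trans_lt (ZMod.val_lt d))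
  · rw [← ZMod.natCast_zmod_val d, hde]
    push_cast
    rfl

/-- Theorem 4.2(ii): for `N = 2^n` (`n ≥ 2`), an odd root index `u`, the ZC sequence
`s(k) = exp(−π i u k²/N)`, and any polynomial `π ∈ ℤ[x]` which is a permutation polynomial
over `ℤ_{2^n}` with induced permutation `σ` of `ℤ/Nℤ`, the sequence `s∘π⁻¹` given by
`y(x) = s(σ⁻¹(x))` is a CAZAC sequence. -/
theorem stmt_11 (n : ℕ) (hn : 2 ≤ n) (N : ℕ) [NeZero N] (hN : N = 2 ^ n)
    (u : ℤ) (hu : Odd u)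
    (s : ℤ → ℂ)
    (hs : ∀ k : ℤ, s k =
      Complex.exp (-(Real.pi : ℂ) * Complex.I * (u : ℂ) * (k : ℂ) ^ 2 / (N : ℂ)))
    (π : Polynomial ℤ)
    (f : ZMod N → ZMod N)
    (hf : ∀ x, f x = (π.map (Int.castRingHom (ZMod N))).eval x)
    (hbij : Function.Bijective f)
    (y : ZMod N → ℂ)
    (hy : ∀ x : ZMod N,
      y x = s (((((Equiv.ofBijective f hbij).symm x).val : ℕ) : ℤ))) :
    (∀ x : ZMod N, ‖y x‖ = 1) ∧
    ∀ d : ZMod N, d ≠ 0 →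
      ∑ x : ZMod N, y x * (starRingEnd ℂ) (y (x + d)) = 0 := by
  subst hN
  set σ := Equiv.ofBijective f hbij
  obtain ⟨Q, hQ⟩ := exists_eval_map_eq_symm _ π σ hf
  have hQbij : Function.Bijective fun z : ZMod (2 ^ n) => (Q.map (Int.castRingHom _)).eval z := by
    simpa only [← hQ] using σ.symm.bijective
  set τ : ℤ → ℤ := fun ℓ => (σ.symm ℓ).val
  have hτ : ∀ ℓ, τ ℓ ≡ Q.eval ℓ [ZMOD 2 ^ n] := fun ℓ => by
    have h := (ZMod.intCast_eq_intCast_iff (τ ℓ) (Q.eval ℓ) (2 ^ n)).mp (by simp [τ, hQ])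
    exact_mod_cast h
  have hyτ : ∀ ℓ : ℤ, y ℓ = zadoffChu u (2 ^ n) (τ ℓ) := fun ℓ => (hy ℓ).trans (hs _)
  refine ⟨fun x => ?_, fun d hd => ?_⟩
  · obtain ⟨ℓ, rfl⟩ := ZMod.intCast_surjective x
    rw [hyτ, norm_zadoffChu]
  obtain ⟨v, E, hv, hE, rfl⟩ := ZMod.exists_eq_two_pow_mul_odd hd
  refine Fintype.sum_eq_zero_of_add_right_eq_neg _ ((2 ^ (n - 1 - v) : ℤ) : ZMod (2 ^ n))
    fun x => ?_
  obtain ⟨ℓ, rfl⟩ := ZMod.intCast_surjective x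
  simp only [← Int.cast_add, hyτ]
  exact zadoffChu_comp_mul_conj_eq_neg hn hu Q
    (fun _ _ => Q.odd_eval_sub_of_surjective (by omega) hQbij.2)
    (Q.odd_derivative_eval_of_injective hn hQbij.1) hτ (by omega) hE ℓ
end

section
/- Let p ≥ 3 be a prime, n ≥ 2 an integer, and N = p^n·N₁, where gcd(p, N₁) = 1 and N₁ is either 1 or a product q₁q₂⋯q_r of distinct primes such that (q_i − 1) divides (p − 1) for every i. Let u be an integer with gcd(u, N) = 1, let m be any integer, fix an integer d with 0 < d < N, and let g = gcd(d, N). For k ∈ ℤ define h_d(k) = ((k+d)^p − k^p − d^p)·m + u·d·k. Then g divides h_d(k) for every integer k, and the N/g integers h_d(0)/g, h_d(1)/g, …, h_d(N/g − 1)/g are pairwise incongruent modulo N/g, i.e., they form a complete residue system modulo N/g (so h_d(k)/g induces a permutation of ℤ/(N/g)ℤ). -/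
/-!
Write `F(k) = (k + d)^p - k^p - d^p`, so that `h(k) = F(k) m + u d k`. Since `d ∣ F(k)`,
also `g ∣ h(k)`. For injectivity it suffices to show that `N ∣ h(x) - h(y)` forces
`N ∣ d (x - y)`: cancelling `d` modulo `N` then leaves `x ≡ y [MOD N / g]`. Modulo each `qᵢ`,
Fermat and `(qᵢ - 1) ∣ (p - 1)` give `k^p ≡ k`, so `F ≡ 0` and `h(x) - h(y) ≡ u d (x - y)`
with `u` a unit. Modulo `p^n`, the binomial theorem gives `p d (x - y) ∣ F(x) - F(y)`, so
`h(x) - h(y) = d (x - y) (u + p w)` and the second factor is prime to `p`.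
-/

def binomDefect (p : ℕ) (d k : ℤ) : ℤ := (k + d) ^ p - k ^ p - d ^ p

def shiftPoly (p : ℕ) (m u d k : ℤ) : ℤ := binomDefect p d k * m + u * d * k

section

variable {p : ℕ}

theorem dvd_binomDefect (hp : p ≠ 0) (d k : ℤ) : d ∣ binomDefect p d k :=
  dvd_sub (by simpa using sub_dvd_pow_sub_pow (k + d) k p) (dvd_pow_self d hp)

theorem dvd_shiftPoly (hp : p ≠ 0) (m u d k : ℤ) : d ∣ shiftPoly p m u d k :=
  dvd_add ((dvd_binomDefect hp d k).mul_right m) ((dvd_mul_left d u).mul_right k)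

theorem add_pow_sub_pow_eq_sum {R : Type*} [CommRing R] (x d : R) :
    (x + d) ^ p - x ^ p = ∑ j ∈ Finset.range p, x ^ j * d ^ (p - j) * (p.choose j : R) := by
  rw [add_pow, Finset.sum_range_succ]
  simp

theorem mul_mul_sub_dvd_binomDefect_sub (hp : p.Prime) (d x y : ℤ) :
    (p : ℤ) * d * (x - y) ∣ binomDefect p d x - binomDefect p d y := by
  have hsplit : binomDefect p d x - binomDefect p d y =
      ∑ j ∈ Finset.range p, (x ^ j - y ^ j) * d ^ (p - j) * (p.choose j : ℤ) := by
    simp only [binomDefect, sub_mul, Finset.sum_sub_distrib, ← add_pow_sub_pow_eq_sum]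
    ring
  rw [hsplit]
  refine Finset.dvd_sum fun j hj => ?_
  obtain rfl | hj0 := eq_or_ne j 0
  · simp
  have hjp : j < p := Finset.mem_range.mp hj
  have hpC : (p : ℤ) ∣ (p.choose j : ℤ) :=
    Int.natCast_dvd_natCast.mpr (hp.dvd_choose_self hj0 hjp)
  have hdd : d ∣ d ^ (p - j) := dvd_pow_self d (by omega)
  exact (mul_dvd_mul (mul_dvd_mul hpC hdd) (sub_dvd_pow_sub_pow x y j)).trans
    (dvd_of_eq (by ring))

theorem ZMod.pow_eq_self_of_sub_one_dvd {q : ℕ} [Fact q.Prime] (hp : p ≠ 0)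
    (hqp : q - 1 ∣ p - 1) (a : ZMod q) : a ^ p = a := by
  obtain rfl | ha := eq_or_ne a 0
  · exact zero_pow hp
  obtain ⟨s, hs⟩ := hqp
  calc a ^ p = (a ^ (q - 1)) ^ s * a := by
        rw [← pow_mul, ← hs, ← pow_succ, Nat.sub_add_cancel (by omega)]
    _ = a := by rw [ZMod.pow_card_sub_one_eq_one ha, one_pow, one_mul]

theorem binomDefect_intCast_zmod {q : ℕ} [Fact q.Prime] (hp : p ≠ 0) (hqp : q - 1 ∣ p - 1)
    (d k : ℤ) : (binomDefect p d k : ZMod q) = 0 := by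
  push_cast [binomDefect]
  simp only [ZMod.pow_eq_self_of_sub_one_dvd hp hqp]
  ring

theorem mul_modEq_mul_of_shiftPoly_modEq_prime {q : ℕ} (hq : q.Prime) (hp : p ≠ 0)
    (hqp : q - 1 ∣ p - 1) {m u d x y : ℤ} (hqu : ¬ (q : ℤ) ∣ u)
    (h : shiftPoly p m u d x ≡ shiftPoly p m u d y [ZMOD q]) : d * x ≡ d * y [ZMOD q] := by
  have := Fact.mk hq
  rw [← ZMod.intCast_eq_intCast_iff] at h ⊢
  have hu : (u : ZMod q) ≠ 0 := by rwa [Ne, ZMod.intCast_zmod_eq_zero_iff_dvd]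
  push_cast [shiftPoly, binomDefect_intCast_zmod hp hqp] at h ⊢
  exact mul_left_cancel₀ hu (by linear_combination h)

theorem mul_modEq_mul_of_shiftPoly_modEq_prime_pow (hp : p.Prime) (n : ℕ) {m u d x y : ℤ}
    (hpu : ¬ (p : ℤ) ∣ u) (h : shiftPoly p m u d x ≡ shiftPoly p m u d y [ZMOD p ^ n]) :
    d * x ≡ d * y [ZMOD p ^ n] := by
  obtain ⟨W, hW⟩ := mul_mul_sub_dvd_binomDefect_sub hp d y x
  have hfac : shiftPoly p m u d y - shiftPoly p m u d x =
      (d * y - d * x) * (u + p * (m * W)) := by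
    simp only [shiftPoly]
    linear_combination m * hW
  have hpc : IsCoprime (p : ℤ) (u + p * (m * W)) :=
    (Nat.prime_iff_prime_int.mp hp).coprime_iff_not_dvd.mpr
      fun hc => hpu ((dvd_add_left (dvd_mul_right _ _)).mp hc)
  rw [Int.modEq_iff_dvd] at h ⊢
  rw [hfac] at h
  exact hpc.pow_left.dvd_of_dvd_mul_right h

end

theorem mul_modEq_mul_of_shiftPoly_modEq {p n r : ℕ} (hp : p.Prime) (hn : n ≠ 0)
    {q : Fin r → ℕ} (hq : ∀ i, (q i).Prime) (hinj : Function.Injective q)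
    (hqp : ∀ i, q i - 1 ∣ p - 1) (hcop : Nat.Coprime p (∏ i, q i)) {m u d x y : ℤ}
    (hu : IsCoprime u ((p : ℤ) ^ n * ∏ i, (q i : ℤ)))
    (h : shiftPoly p m u d x ≡ shiftPoly p m u d y [ZMOD (p : ℤ) ^ n * ∏ i, (q i : ℤ)]) :
    d * x ≡ d * y [ZMOD (p : ℤ) ^ n * ∏ i, (q i : ℤ)] := by
  have not_dvd_u (ℓ : ℕ) (hℓ : ℓ.Prime) (hℓN : (ℓ : ℤ) ∣ (p : ℤ) ^ n * ∏ i, (q i : ℤ)) :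
      ¬ (ℓ : ℤ) ∣ u := fun hℓu =>
    (Nat.prime_iff_prime_int.mp hℓ).not_isUnit (hu.isUnit_of_dvd' hℓu hℓN)
  have hq_dvd : ∀ i, (q i : ℤ) ∣ (p : ℤ) ^ n * ∏ i, (q i : ℤ) := fun i =>
    (Finset.dvd_prod_of_mem _ (Finset.mem_univ i)).mul_left _
  have ppart : d * x ≡ d * y [ZMOD (p : ℤ) ^ n] :=
    mul_modEq_mul_of_shiftPoly_modEq_prime_pow hp n
      (not_dvd_u p hp ((dvd_pow_self _ hn).mul_right _)) (h.of_mul_right _)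
  have qpart : ∀ i, d * x ≡ d * y [ZMOD q i] := fun i =>
    mul_modEq_mul_of_shiftPoly_modEq_prime (hq i) hp.ne_zero (hqp i)
      (not_dvd_u (q i) (hq i) (hq_dvd i)) (h.of_dvd (hq_dvd i))
  have hq_coprime : Pairwise (Function.onFun IsCoprime fun i => (q i : ℤ)) := fun i j hij =>
    Nat.isCoprime_iff_coprime.mpr ((Nat.coprime_primes (hq i) (hq j)).mpr (hinj.ne hij))
  have hpq : IsCoprime ((p : ℤ) ^ n) (∏ i, (q i : ℤ)) := by
    exact_mod_cast Nat.isCoprime_iff_coprime.mpr (hcop.pow_left n)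
  exact Int.modEq_iff_dvd.mpr <|
    hpq.mul_dvd ppart.dvd (Fintype.prod_dvd_of_coprime hq_coprime fun i => (qpart i).dvd)

theorem bijective_fin_intCast_zmod_of_modEq {M : ℕ} [NeZero M] (φ : ℤ → ℤ)
    (hφ : ∀ x y, φ x ≡ φ y [ZMOD M] → x ≡ y [ZMOD M]) :
    Function.Bijective (fun k : Fin M => (φ (k : ℕ) : ZMod M)) := by
  refine (Fintype.bijective_iff_injective_and_card _).mpr ⟨fun k k' hkk => ?_, by simp⟩
  have := hφ _ _ ((ZMod.intCast_eq_intCast_iff _ _ _).mp hkk)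
  exact Fin.ext (Int.natCast_modEq_iff.mp this |>.eq_of_lt_of_lt k.isLt k'.isLt)

theorem stmt_13_general (p : ℕ) (hp : p.Prime) (n : ℕ) (hn : 2 ≤ n)
    (N N₁ : ℕ) (hN : N = p ^ n * N₁) (hcop : Nat.Coprime p N₁)
    (r : ℕ) (q : Fin r → ℕ) (hq : ∀ i, (q i).Prime) (hinj : Function.Injective q)
    (hN₁ : N₁ = ∏ i, q i) (hqdvd : ∀ i, (q i - 1) ∣ (p - 1))
    (u : ℤ) (hu : Int.gcd u (N : ℤ) = 1) (m : ℤ)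
    (d : ℕ) (g : ℕ) (hg : g = Nat.gcd d N)
    (h : ℤ → ℤ)
    (hh : ∀ k : ℤ, h k =
      ((k + (d : ℤ)) ^ p - k ^ p - (d : ℤ) ^ p) * m + u * (d : ℤ) * k) :
    (∀ k : ℤ, (g : ℤ) ∣ h k) ∧
    Function.Bijective
      (fun k : Fin (N / g) => ((h ((k : ℕ) : ℤ) / (g : ℤ)) : ZMod (N / g))) := by
  obtain rfl : h = shiftPoly p m u d := funext hh
  have hNz : (N : ℤ) = (p : ℤ) ^ n * ∏ i, (q i : ℤ) := by rw [hN, hN₁]; push_cast; rfl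
  have hN0 : N ≠ 0 := by
    rw [← Int.natCast_ne_zero, hNz]
    exact mul_ne_zero (pow_ne_zero _ (by exact_mod_cast hp.ne_zero))
      (Finset.prod_ne_zero_iff.mpr fun i _ => by exact_mod_cast (hq i).ne_zero)
  have hgN : g ∣ N := hg ▸ Nat.gcd_dvd_right d N
  have hg0 : 0 < g := hg ▸ Nat.gcd_pos_of_pos_right d (Nat.pos_of_ne_zero hN0)
  have hdvd : ∀ k : ℤ, (g : ℤ) ∣ shiftPoly p m u d k := fun k =>
    (Int.natCast_dvd_natCast.mpr (hg ▸ Nat.gcd_dvd_left d N)).trans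
      (dvd_shiftPoly hp.ne_zero _ _ _ _)
  refine ⟨hdvd, ?_⟩
  have : NeZero (N / g) :=
    ⟨(Nat.div_pos (Nat.le_of_dvd (Nat.pos_of_ne_zero hN0) hgN) hg0).ne'⟩
  refine bijective_fin_intCast_zmod_of_modEq (fun k => shiftPoly p m u d k / g) fun x y hxy => ?_
  have hmodN : shiftPoly p m u d x ≡ shiftPoly p m u d y [ZMOD N] :=
    Int.ModEq.of_div (by rwa [Int.natCast_div] at hxy) (hdvd x) (hdvd y)
      (Int.natCast_dvd_natCast.mpr hgN)
  have hdmod : (d : ℤ) * x ≡ d * y [ZMOD N] := by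
    rw [hNz] at hmodN ⊢
    refine mul_modEq_mul_of_shiftPoly_modEq hp (by omega) hq hinj hqdvd (hN₁ ▸ hcop) ?_ hmodN
    rw [← hNz]
    exact Int.isCoprime_iff_gcd_eq_one.mpr hu
  have := hdmod.cancel_left_div_gcd (by omega)
  rwa [Int.gcd_natCast_natCast, Nat.gcd_comm, ← hg, ← Int.natCast_div] at this

/-- Lemma D.1 (Appendix D): let `p ≥ 3` be prime, `n ≥ 2`, `N = p^n·N₁` with `gcd(p,N₁)=1`
and `N₁` equal to `1` or a product of distinct primes `qᵢ` with `(qᵢ−1) ∣ (p−1)`.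
For `gcd(u,N)=1`, any integer `m`, a shift `0 < d < N` and `g = gcd(d,N)`, the quantity
`h_d(k) = ((k+d)^p − k^p − d^p)·m + u·d·k` is divisible by `g` for every `k`, and
`h_d(k)/g` induces a permutation of `ℤ_{N/g}` (its values at `k = 0,…,N/g−1` form a
complete residue system modulo `N/g`). -/
theorem stmt_13 (p : ℕ) (hp : p.Prime) (hp3 : 3 ≤ p) (n : ℕ) (hn : 2 ≤ n)
    (N N₁ : ℕ) (hN : N = p ^ n * N₁) (hcop : Nat.Coprime p N₁)
    (r : ℕ) (q : Fin r → ℕ) (hq : ∀ i, (q i).Prime) (hinj : Function.Injective q)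
    (hN₁ : N₁ = ∏ i, q i) (hqdvd : ∀ i, (q i - 1) ∣ (p - 1))
    (u : ℤ) (hu : Int.gcd u (N : ℤ) = 1) (m : ℤ)
    (d : ℕ) (hd0 : 0 < d) (hdN : d < N) (g : ℕ) (hg : g = Nat.gcd d N)
    (h : ℤ → ℤ)
    (hh : ∀ k : ℤ, h k =
      ((k + (d : ℤ)) ^ p - k ^ p - (d : ℤ) ^ p) * m + u * (d : ℤ) * k) :
    (∀ k : ℤ, (g : ℤ) ∣ h k) ∧
    Function.Bijective
      (fun k : Fin (N / g) => ((h ((k : ℕ) : ℤ) / (g : ℤ)) : ZMod (N / g))) :=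
  stmt_13_general p hp n hn N N₁ hN hcop r q hq hinj hN₁ hqdvd u hu m d g hg h hh
end
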